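/- Let (E, d, ∧) be a rooftop metric space. Then (E, d) is a complete metric space if and only if every increasing Cauchy sequence converges and every decreasing Cauchy sequence converges. -/
import Mathlib


structure Rooftop (E : Type*) [MetricSpace E] where
  wedge : E → E → E
  comm : ∀ x y, wedge x y = wedge y x
  assoc : ∀ x y z, wedge (wedge x y) z = wedge x (wedge y z)
  idem : ∀ x, wedge x x = x
  dist_wedge_le : ∀ x y z, dist (wedge x z) (wedge y z) ≤ dist x y

namespace RooftopAux

variable {E : Type*} [MetricSpace E] (R : Rooftop E)

/-- `w R y n m = y n ∧ y (n+1) ∧ ... ∧ y (n+m)`. -/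
def w (y : ℕ → E) (n : ℕ) : ℕ → E
  | 0 => y n
  | m + 1 => R.wedge (w y n m) (y (n + m + 1))

lemma dist_wedge_le' (a x y : E) : dist (R.wedge a x) (R.wedge a y) ≤ dist x y := by
  rw [R.comm a x, R.comm a y]; exact R.dist_wedge_le x y a

/-- Each `w R y n m` can be written as `c ∧ y (n+m)` for some `c`. -/
lemma w_tail (y : ℕ → E) (n : ℕ) : ∀ m, ∃ c, w R y n m = R.wedge c (y (n + m)) := by
  intro m
  cases m with
  | zero => exact ⟨y n, (R.idem _).symm⟩
  | succ m => exact ⟨w R y n m, rfl⟩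

lemma key (y : ℕ → E) (n m : ℕ) (b : E) :
    dist (R.wedge (w R y n m) b) (w R y n m) ≤ dist b (y (n + m)) := by
  obtain ⟨c, hc⟩ := w_tail R y n m
  set t := y (n + m) with ht
  rw [hc]
  have h1 : R.wedge (R.wedge c t) b = R.wedge (R.wedge t b) c := by
    rw [R.assoc, R.comm c (R.wedge t b)]
  have h2 : R.wedge c t = R.wedge t c := R.comm c t
  rw [h1, h2]
  calc dist (R.wedge (R.wedge t b) c) (R.wedge t c) ≤ dist (R.wedge t b) t :=
        R.dist_wedge_le _ _ _
    _ = dist (R.wedge b t) (R.wedge t t) := by rw [R.comm t b, R.idem t]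
    _ ≤ dist b t := R.dist_wedge_le _ _ _

lemma w_decreasing (y : ℕ → E) (n m : ℕ) :
    R.wedge (w R y n (m + 1)) (w R y n m) = w R y n (m + 1) := by
  show R.wedge (R.wedge (w R y n m) (y (n + m + 1))) (w R y n m) = _
  set t := w R y n m
  set b := y (n + m + 1)
  rw [R.assoc, R.comm b t, ← R.assoc, R.idem t]
  rfl

lemma w_shift (y : ℕ → E) (n : ℕ) : ∀ m, w R y n (m + 1) = R.wedge (y n) (w R y (n + 1) m) := by
  intro m
  induction m with
  | zero => show R.wedge (y n) (y (n + 0 + 1)) = R.wedge (y n) (y (n + 1)); norm_num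
  | succ m ih =>
      show R.wedge (w R y n (m + 1)) (y (n + m + 1 + 1)) = _
      rw [ih, R.assoc]
      congr 2
      show y (n + m + 1 + 1) = y (n + 1 + m + 1)
      congr 1; omega

end RooftopAux

open RooftopAux Filter

/-- A rooftop metric space is complete iff every increasing Cauchy sequence converges
and every decreasing Cauchy sequence converges, where `x ≤ y` iff `x ∧ y = x`. -/
theorem rooftop_complete_iff {E : Type*} [MetricSpace E] (R : Rooftop E) :
    CompleteSpace E ↔
      ((∀ x : ℕ → E, CauchySeq x → (∀ n, R.wedge (x n) (x (n + 1)) = x n) →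
          ∃ l, Filter.Tendsto x Filter.atTop (nhds l)) ∧
       (∀ x : ℕ → E, CauchySeq x → (∀ n, R.wedge (x (n + 1)) (x n) = x (n + 1)) →
          ∃ l, Filter.Tendsto x Filter.atTop (nhds l))) := by
  constructor
  · intro h
    exact ⟨fun x hx _ => cauchySeq_tendsto_of_complete hx,
           fun x hx _ => cauchySeq_tendsto_of_complete hx⟩
  · rintro ⟨hinc, hdec⟩
    apply Metric.complete_of_cauchySeq_tendsto
    intro u hu
    obtain ⟨φ, hφ, hyc⟩ := hu.subseq_mem
      (V := fun n => {p : E × E | dist p.1 p.2 < (1/2 : ℝ)^n})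
      (fun n => Metric.dist_mem_uniformity (by positivity))
    set y : ℕ → E := u ∘ φ with hy_def
    have hy' : ∀ k, dist (y (k+1)) (y k) ≤ (1/2 : ℝ)^k := fun k => (hyc k).le
    -- consecutive distance bound for w
    have hconsec : ∀ n m, dist (w R y n m) (w R y n (m+1)) ≤ (1/2 : ℝ)^n * (1/2)^m := by
      intro n m
      have h1 : dist (w R y n m) (w R y n (m+1)) ≤ dist (y (n+m+1)) (y (n+m)) := by
        rw [dist_comm]
        exact key R y n m (y (n+m+1))
      calc dist (w R y n m) (w R y n (m+1)) ≤ dist (y (n+m+1)) (y (n+m)) := h1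
        _ ≤ (1/2 : ℝ)^(n+m) := hy' (n+m)
        _ = (1/2 : ℝ)^n * (1/2)^m := pow_add _ _ _
    have hcauchy : ∀ n, CauchySeq (w R y n) := fun n =>
      cauchySeq_of_le_geometric (1/2) ((1/2)^n) (by norm_num) (hconsec n)
    choose z hz using fun n => hdec (w R y n) (hcauchy n) (w_decreasing R y n)
    have hdist_z : ∀ n, dist (y n) (z n) ≤ 2 * (1/2 : ℝ)^n := by
      intro n
      have := dist_le_of_le_geometric_of_tendsto₀ (1/2) ((1/2 : ℝ)^n) (by norm_num)
        (hconsec n) (hz n)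
      have h0 : w R y n 0 = y n := rfl
      rw [h0] at this
      calc dist (y n) (z n) ≤ (1/2 : ℝ)^n / (1 - 1/2) := this
        _ = 2 * (1/2 : ℝ)^n := by ring
    have hzrec : ∀ n, z n = R.wedge (y n) (z (n+1)) := by
      intro n
      have h1 : Tendsto (fun m => w R y n (m+1)) atTop (nhds (z n)) :=
        (hz n).comp (tendsto_add_atTop_nat 1)
      have h2 : Tendsto (fun m => R.wedge (y n) (w R y (n+1) m)) atTop
          (nhds (R.wedge (y n) (z (n+1)))) := by
        apply tendsto_of_tendsto_of_dist (tendsto_const_nhds.congr fun m => rfl)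
        · exact squeeze_zero (fun m => dist_nonneg)
            (fun m => dist_wedge_le' R (y n) _ _)
            (by simpa [dist_comm] using tendsto_iff_dist_tendsto_zero.mp (hz (n+1)))
      have h1' : Tendsto (fun m => R.wedge (y n) (w R y (n+1) m)) atTop (nhds (z n)) := by
        refine h1.congr fun m => ?_
        exact w_shift R y n m
      exact tendsto_nhds_unique h1' h2
    have hz_inc : ∀ n, R.wedge (z n) (z (n+1)) = z n := by
      intro n
      rw [hzrec n, R.assoc, R.idem]
    have hz_cauchy : CauchySeq z := by
      apply cauchySeq_of_le_geometric (1/2) 4 (by norm_num)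
      intro n
      calc dist (z n) (z (n+1))
          ≤ dist (z n) (y n) + dist (y n) (y (n+1)) + dist (y (n+1)) (z (n+1)) :=
            dist_triangle4 _ _ _ _
        _ ≤ 2 * (1/2 : ℝ)^n + (1/2)^n + 2 * (1/2)^(n+1) := by
            gcongr
            · rw [dist_comm]; exact hdist_z n
            · rw [dist_comm]; exact hy' n
            · exact hdist_z (n+1)
        _ ≤ 4 * (1/2 : ℝ)^n := by rw [pow_succ]; ring_nf; nlinarith [pow_pos (by norm_num : (0:ℝ) < 1/2) n]
    obtain ⟨l, hl⟩ := hinc z hz_cauchy hz_inc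
    have hyl : Tendsto y atTop (nhds l) := by
      apply tendsto_of_tendsto_of_dist hl
      apply squeeze_zero (fun n => dist_nonneg) (fun n => (dist_comm (z n) (y n)) ▸ hdist_z n)
      have : Tendsto (fun n => (2:ℝ) * (1/2)^n) atTop (nhds (2 * 0)) :=
        (tendsto_pow_atTop_nhds_zero_of_lt_one (by norm_num) (by norm_num)).const_mul 2
      simpa using this
    exact ⟨l, tendsto_nhds_of_cauchySeq_of_subseq hu hφ.tendsto_atTop hyl⟩
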